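/- arXiv:2506.07832 — 4 statements merged into one kernel-verified Lean document; each statement's English description precedes it below -/
import Mathlib

section
/- Cousin's Lemma for compact lines: if K is a compact line and δ is a gauge on K (a function assigning to each x ∈ K an open interval δ(x) of K with x ∈ δ(x)), then K admits a δ-fine tagged partition, i.e., points 0_K = x_0 ≤ x_1 ≤ ... ≤ x_n = 1_K and tags t_i ∈ [x_{i-1}, x_i] with (x_{i-1}, x_i] ⊆ δ(t_i) for each i. -/
open Set Filter MeasureTheory

/-- A tagged partition of the interval `[a,b]` in a linear order `K`. -/
structure TaggedPartition (K : Type*) [LinearOrder K] (a b : K) where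
  n : ℕ
  x : ℕ → K
  t : ℕ → K
  x_zero : x 0 = a
  x_last : x n = b
  mono : ∀ i < n, x i ≤ x (i + 1)
  tag_mem : ∀ i < n, t (i + 1) ∈ Set.Icc (x i) (x (i + 1))

/-- A gauge on the interval `[a,b]` of `K`: each point of `[a,b]` is assigned a
relatively open subinterval of `[a,b]` containing it. -/
def IsGauge (K : Type*) [LinearOrder K] [TopologicalSpace K] (a b : K) (δ : K → Set K) : Prop :=
  ∀ x ∈ Set.Icc a b, x ∈ δ x ∧ (δ x).OrdConnected ∧ ∃ U, IsOpen U ∧ δ x = U ∩ Set.Icc a b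

/-- A tagged partition is `δ`-fine when `(x_{i-1}, x_i] ⊆ δ(t_i)` for all `i`. -/
def TaggedPartition.IsFine {K : Type*} [LinearOrder K] {a b : K}
    (P : TaggedPartition K a b) (δ : K → Set K) : Prop :=
  ∀ i < P.n, Set.Ioc (P.x i) (P.x (i + 1)) ⊆ δ (P.t (i + 1))

/-- The Riemann sum `S(f,G,P) = f(a)G(a) + Σ f(t_i)(G(x_i) - G(x_{i-1}))`. -/
noncomputable def riemannSum {K : Type*} [LinearOrder K] {a b : K}
    (f G : K → ℝ) (P : TaggedPartition K a b) : ℝ :=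
  f a * G a + ∑ i ∈ Finset.range P.n, f (P.t (i + 1)) * (G (P.x (i + 1)) - G (P.x i))

/-- `f` has Kurzweil–Stieltjes integral `A` with respect to `G` over `[a,b]`. -/
def HasIntegral {K : Type*} [LinearOrder K] [TopologicalSpace K]
    (f G : K → ℝ) (a b : K) (A : ℝ) : Prop :=
  ∀ ε : ℝ, 0 < ε → ∃ δ : K → Set K, IsGauge K a b δ ∧
    ∀ P : TaggedPartition K a b, P.IsFine δ → |riemannSum f G P - A| < ε

/-- `G` is amenable: right-continuous everywhere, and regulated (left limits exist at
left-dense points, right limits at right-dense points). -/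
def Amenable {K : Type*} [LinearOrder K] [TopologicalSpace K] [BoundedOrder K]
    (G : K → ℝ) : Prop :=
  (∀ x : K, ContinuousWithinAt G (Set.Ici x) x) ∧
  (∀ x : K, x ≠ ⊥ → (¬ ∃ y, y ⋖ x) → ∃ l, Filter.Tendsto G (nhdsWithin x (Set.Iio x)) (nhds l)) ∧
  (∀ x : K, x ≠ ⊤ → (¬ ∃ y, x ⋖ y) → ∃ l, Filter.Tendsto G (nhdsWithin x (Set.Ioi x)) (nhds l))

open Classical in
/-- `L_G(x)`: `0` at the least element, `G` of the immediate predecessor if `x` is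
left-isolated, and the left limit of `G` at `x` if `x` is left-dense. -/
noncomputable def Lfun {K : Type*} [LinearOrder K] [TopologicalSpace K] [BoundedOrder K]
    (G : K → ℝ) (x : K) : ℝ :=
  if x = ⊥ then 0
  else if h : ∃ y, y ⋖ x then G h.choose
  else Function.leftLim G x

/-- The set of variation sums of `G` over divisions of `[a,b]`. -/
def varSums {K : Type*} [LinearOrder K] (G : K → ℝ) (a b : K) : Set ℝ :=
  {v | ∃ (n : ℕ) (x : ℕ → K), x 0 = a ∧ x n = b ∧ (∀ i < n, x i ≤ x (i + 1)) ∧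
        v = ∑ i ∈ Finset.range n, |G (x (i + 1)) - G (x i)|}

/-- `S` is null for the outer measure induced by `μ` via covers by countably many
open intervals. -/
def GNull {K : Type*} [LinearOrder K] [TopologicalSpace K] [MeasurableSpace K]
    (μ : MeasureTheory.Measure K) (S : Set K) : Prop :=
  ∀ ε : ℝ, 0 < ε → ∃ I : ℕ → Set K, (∀ n, IsOpen (I n) ∧ (I n).OrdConnected) ∧
    S ⊆ ⋃ n, I n ∧ ∑' n, μ (I n) < ENNReal.ofReal ε

open Topology

/-! The set of `b` for which `[⊥, b]` has a `δ`-fine tagged partition contains `⊥`; by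
compactness it has a supremum `c`. A last step tagged at `c` shows that `c` itself is in the set,
and, unless `c = ⊤`, one more step reaches a point beyond `c`, a contradiction. -/

namespace TaggedPartition

variable {K : Type*} [LinearOrder K] {a b : K}

def snoc (P : TaggedPartition K a b) (d t : K) (hbd : b ≤ d) (ht : t ∈ Icc b d) :
    TaggedPartition K a d where
  n := P.n + 1
  x i := if i ≤ P.n then P.x i else d
  t i := if i ≤ P.n then P.t i else t
  x_zero := by simp [P.x_zero]
  x_last := by simp
  mono i hi := by
    rcases (Nat.lt_succ_iff.mp hi).lt_or_eq with hi | rfl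
    · simpa [hi.le, Nat.succ_le_of_lt hi] using P.mono i hi
    · simpa [P.x_last] using hbd
  tag_mem i hi := by
    rcases (Nat.lt_succ_iff.mp hi).lt_or_eq with hi | rfl
    · simpa [hi.le, Nat.succ_le_of_lt hi] using P.tag_mem i hi
    · simpa [P.x_last] using ht

theorem IsFine.snoc {δ : K → Set K} {P : TaggedPartition K a b} (hP : P.IsFine δ) {d t : K}
    (hbd : b ≤ d) (ht : t ∈ Icc b d) (hδ : Ioc b d ⊆ δ t) : (P.snoc d t hbd ht).IsFine δ := by
  intro i hi
  rcases (Nat.lt_succ_iff.mp hi).lt_or_eq with hi | rfl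
  · simpa [TaggedPartition.snoc, hi.le, Nat.succ_le_of_lt hi] using hP i hi
  · simpa [TaggedPartition.snoc, P.x_last] using hδ

end TaggedPartition

section FineEnds

variable {K : Type*} [LinearOrder K] (δ : K → Set K) (a : K)

def fineEnds : Set K := {b | ∃ P : TaggedPartition K a b, P.IsFine δ}

variable {δ a}

theorem self_mem_fineEnds : a ∈ fineEnds δ a :=
  ⟨⟨0, fun _ => a, fun _ => a, rfl, rfl, fun _ h => absurd h (Nat.not_lt_zero _),
    fun _ h => absurd h (Nat.not_lt_zero _)⟩, fun _ h => absurd h (Nat.not_lt_zero _)⟩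

theorem mem_fineEnds_of_Ioc_subset {b d t : K} (hb : b ∈ fineEnds δ a) (hbd : b ≤ d)
    (ht : t ∈ Icc b d) (hδ : Ioc b d ⊆ δ t) : d ∈ fineEnds δ a :=
  let ⟨P, hP⟩ := hb
  ⟨P.snoc d t hbd ht, hP.snoc hbd ht hδ⟩

variable [TopologicalSpace K] [OrderTopology K]

theorem IsLUB.mem_fineEnds {c : K} (hc : IsLUB (fineEnds δ a) c) (hδc : δ c ∈ 𝓝 c) :
    c ∈ fineEnds δ a := by
  by_cases hcS : c ∈ fineEnds δ a
  · exact hcS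
  obtain ⟨s, hs, hsc⟩ : ∃ s ∈ fineEnds δ a, s < c :=
    ⟨a, self_mem_fineEnds,
      (hc.1 self_mem_fineEnds).lt_of_ne fun h => hcS (h ▸ self_mem_fineEnds)⟩
  obtain ⟨l, hlc, hl⟩ := exists_Ioc_subset_of_mem_nhds hδc ⟨s, hsc⟩
  obtain ⟨b, hb, hlb⟩ := (lt_isLUB_iff hc).mp hlc
  have hbc : b ≤ c := hc.1 hb
  exact mem_fineEnds_of_Ioc_subset hb hbc ⟨hbc, le_rfl⟩
    ((Ioc_subset_Ioc_left hlb.le).trans hl)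

/-- With `[c, u) ⊆ δ c`, step to a point of `(c, u)` tagged at `c`, or, when `c ⋖ u`, to `u`
tagged at `u` itself. -/
theorem exists_gt_mem_fineEnds {c : K} (hc : c ∈ fineEnds δ a) (hδ : ∀ x, x ∈ δ x)
    (hδc : δ c ∈ 𝓝 c) (hc_top : ¬IsMax c) : ∃ d ∈ fineEnds δ a, c < d := by
  obtain ⟨u, hcu, hu⟩ := exists_Ico_subset_of_mem_nhds hδc (not_isMax_iff.mp hc_top)
  by_cases hdense : ∃ d, c < d ∧ d < u
  · obtain ⟨d, hcd, hdu⟩ := hdense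
    exact ⟨d, mem_fineEnds_of_Ioc_subset hc hcd.le ⟨le_rfl, hcd.le⟩
      fun x hx => hu ⟨hx.1.le, hx.2.trans_lt hdu⟩, hcd⟩
  · push Not at hdense
    refine ⟨u, mem_fineEnds_of_Ioc_subset hc hcu.le ⟨hcu.le, le_rfl⟩ fun x hx => ?_, hcu⟩
    rw [le_antisymm hx.2 (hdense x hx.1)]
    exact hδ u

end FineEnds

theorem exists_isLUB_of_compactSpace {K : Type*} [LinearOrder K] [TopologicalSpace K]
    [OrderTopology K] [CompactSpace K] {s : Set K} (hs : s.Nonempty) : ∃ c, IsLUB s c := by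
  obtain ⟨c, -, hc⟩ := isClosed_closure.isCompact.exists_isLUB hs.closure
  exact ⟨c, by rwa [IsLUB, upperBounds_closure] at hc⟩

theorem exists_isFine_of_mem_nhds {K : Type*} [LinearOrder K] [TopologicalSpace K]
    [OrderTopology K] [CompactSpace K] [BoundedOrder K] {δ : K → Set K}
    (hδ : ∀ x, δ x ∈ 𝓝 x) : ∃ P : TaggedPartition K (⊥ : K) (⊤ : K), P.IsFine δ := by
  obtain ⟨c, hc⟩ := exists_isLUB_of_compactSpace ⟨⊥, self_mem_fineEnds (δ := δ)⟩
  have hcS := hc.mem_fineEnds (hδ c)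
  by_cases hc_top : IsMax c
  · exact hc_top.eq_top ▸ hcS
  obtain ⟨d, hd, hcd⟩ :=
    exists_gt_mem_fineEnds hcS (fun x => mem_of_mem_nhds (hδ x)) (hδ c) hc_top
  exact absurd (hc.1 hd) hcd.not_ge

theorem IsGauge.mem_nhds {K : Type*} [LinearOrder K] [TopologicalSpace K] [BoundedOrder K]
    {δ : K → Set K} (hδ : IsGauge K ⊥ ⊤ δ) (x : K) : δ x ∈ 𝓝 x := by
  obtain ⟨hx, -, U, hU, hδU⟩ := hδ x ⟨bot_le, le_top⟩
  rw [hδU, Icc_bot_top, inter_univ] at hx ⊢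
  exact hU.mem_nhds hx

theorem cousin_lemma {K : Type*} [LinearOrder K] [TopologicalSpace K] [OrderTopology K]
    [CompactSpace K] [BoundedOrder K] (δ : K → Set K) (hδ : IsGauge K ⊥ ⊤ δ) :
    ∃ P : TaggedPartition K (⊥ : K) (⊤ : K), P.IsFine δ :=
  exists_isFine_of_mem_nhds hδ.mem_nhds
end

section
/- Bolzano–Cauchy criterion: a function f : K → ℝ on a compact line K is Kurzweil–Stieltjes integrable with respect to G : K → ℝ if and only if for every ε > 0 there exists a gauge δ on K such that |S(f,G,P) − S(f,G,Q)| < ε for every pair of δ-fine tagged partitions P and Q of K. -/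
open Set Filter MeasureTheory

/-!
Only the "if" direction has content. Take gauges `δₙ` witnessing the Cauchy condition for
`ε = 1/(n+1)` and replace them by the decreasing gauges `δ₀ ∩ ⋯ ∩ δₙ`. If each of these admits a
fine partition `Pₙ`, the sums `S(f,G,Pₙ)` form a Cauchy sequence, and every `δₙ`-fine partition
has its Riemann sum within `1/(n+1)` of the limit, which is therefore the integral. If some
`δₙ` admits no fine partition, every number is an integral vacuously.
-/

section

variable {K : Type*} [LinearOrder K] {a b : K}

theorem TaggedPartition.IsFine.mono {δ δ' : K → Set K} (hδ : ∀ x, δ x ⊆ δ' x)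
    {P : TaggedPartition K a b} (hP : P.IsFine δ) : P.IsFine δ' :=
  fun i hi => (hP i hi).trans (hδ _)

variable [TopologicalSpace K]

theorem IsGauge.biInter_Iic {δ : ℕ → K → Set K} (hδ : ∀ n, IsGauge K a b (δ n)) (n : ℕ) :
    IsGauge K a b (fun x => ⋂ k ∈ Iic n, δ k x) := by
  intro x hx
  choose hmem hconn U hU hδU using fun k => hδ k x hx
  refine ⟨mem_iInter₂.2 fun k _ => hmem k, ordConnected_biInter fun k _ => hconn k,
    ⋂ k ∈ Iic n, U k, (finite_Iic n).isOpen_biInter fun k _ => hU k, ?_⟩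
  simp only [hδU, biInter_inter nonempty_Iic]

theorem HasIntegral.exists_gauge_abs_riemannSum_sub_lt {f G : K → ℝ} {A : ℝ}
    (hA : HasIntegral f G a b A) {ε : ℝ} (hε : 0 < ε) :
    ∃ δ : K → Set K, IsGauge K a b δ ∧ ∀ P Q : TaggedPartition K a b, P.IsFine δ → Q.IsFine δ →
      |riemannSum f G P - riemannSum f G Q| < ε := by
  obtain ⟨δ, hδ, hclose⟩ := hA (ε / 2) (half_pos hε)
  refine ⟨δ, hδ, fun P Q hP hQ => ?_⟩
  calc |riemannSum f G P - riemannSum f G Q|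
      ≤ |riemannSum f G P - A| + |A - riemannSum f G Q| := abs_sub_le _ _ _
    _ < ε / 2 + ε / 2 := add_lt_add (hclose P hP) (abs_sub_comm A _ ▸ hclose Q hQ)
    _ = ε := add_halves ε

theorem hasIntegral_of_not_exists_isFine {δ : K → Set K} (hδ : IsGauge K a b δ)
    (hP : ¬ ∃ P : TaggedPartition K a b, P.IsFine δ) (f G : K → ℝ) (A : ℝ) :
    HasIntegral f G a b A :=
  fun _ _ => ⟨δ, hδ, fun P hfine => (hP ⟨P, hfine⟩).elim⟩

theorem exists_hasIntegral_of_antitone_gauges {f G : K → ℝ} {δ : ℕ → K → Set K}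
    (hδ : ∀ n, IsGauge K a b (δ n)) (hanti : ∀ m n, m ≤ n → ∀ x, δ n x ⊆ δ m x)
    (hcau : ∀ n (P Q : TaggedPartition K a b), P.IsFine (δ n) → Q.IsFine (δ n) →
      |riemannSum f G P - riemannSum f G Q| < 1 / (n + 1))
    (P : ℕ → TaggedPartition K a b) (hP : ∀ n, (P n).IsFine (δ n)) :
    ∃ A, HasIntegral f G a b A := by
  have hclose : ∀ N n, N ≤ n → ∀ Q : TaggedPartition K a b, Q.IsFine (δ N) →
      |riemannSum f G Q - riemannSum f G (P n)| < 1 / (N + 1) :=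
    fun N n hn Q hQ => hcau N Q (P n) hQ ((hP n).mono (hanti N n hn))
  have hcauchy : CauchySeq fun n => riemannSum f G (P n) :=
    cauchySeq_of_le_tendsto_0 (fun N : ℕ => 1 / ((N : ℝ) + 1))
      (fun n m N hn hm => (hclose N m hm _ ((hP n).mono (hanti N n hn))).le)
      tendsto_one_div_add_atTop_nhds_zero_nat
  obtain ⟨A, hA⟩ := cauchySeq_tendsto_of_complete hcauchy
  refine ⟨A, fun ε hε => ?_⟩
  obtain ⟨N, hN⟩ := exists_nat_one_div_lt hε
  refine ⟨δ N, hδ N, fun Q hQ => lt_of_le_of_lt ?_ hN⟩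
  exact le_of_tendsto ((tendsto_const_nhds.sub hA).abs)
    (eventually_atTop.2 ⟨N, fun n hn => (hclose N n hn Q hQ).le⟩)

end

theorem bolzano_cauchy_criterion_general {K : Type*} [LinearOrder K] [TopologicalSpace K]
    [BoundedOrder K] (f G : K → ℝ) :
    (∃ A, HasIntegral f G (⊥ : K) ⊤ A) ↔
      ∀ ε : ℝ, 0 < ε → ∃ δ : K → Set K, IsGauge K ⊥ ⊤ δ ∧
        ∀ P Q : TaggedPartition K (⊥ : K) (⊤ : K), P.IsFine δ → Q.IsFine δ →
          |riemannSum f G P - riemannSum f G Q| < ε := by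
  refine ⟨fun ⟨A, hA⟩ _ hε => hA.exists_gauge_abs_riemannSum_sub_lt hε, fun h => ?_⟩
  choose δ hδ hcau using fun n : ℕ => h (1 / (n + 1)) Nat.one_div_pos_of_nat
  set η : ℕ → K → Set K := fun n x => ⋂ k ∈ Iic n, δ k x
  have hη : ∀ n, IsGauge K ⊥ ⊤ (η n) := IsGauge.biInter_Iic hδ
  have hη_le : ∀ n x, η n x ⊆ δ n x := fun n _ => biInter_subset_of_mem self_mem_Iic
  have hη_anti : ∀ m n, m ≤ n → ∀ x, η n x ⊆ η m x :=
    fun _ _ hmn _ => biInter_subset_biInter_left (Iic_subset_Iic.2 hmn)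
  by_cases hfine : ∀ n, ∃ P : TaggedPartition K ⊥ ⊤, P.IsFine (η n)
  · choose P hP using hfine
    exact exists_hasIntegral_of_antitone_gauges hη hη_anti
      (fun n Q R hQ hR => hcau n Q R (hQ.mono (hη_le n)) (hR.mono (hη_le n))) P hP
  · obtain ⟨n, hn⟩ := not_forall.1 hfine
    exact ⟨0, hasIntegral_of_not_exists_isFine (hη n) hn f G 0⟩

theorem bolzano_cauchy_criterion {K : Type*} [LinearOrder K] [TopologicalSpace K]
    [OrderTopology K] [CompactSpace K] [BoundedOrder K] (f G : K → ℝ) :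
    (∃ A, HasIntegral f G (⊥ : K) ⊤ A) ↔
      ∀ ε : ℝ, 0 < ε → ∃ δ : K → Set K, IsGauge K ⊥ ⊤ δ ∧
        ∀ P Q : TaggedPartition K (⊥ : K) (⊤ : K), P.IsFine δ → Q.IsFine δ →
          |riemannSum f G P - riemannSum f G Q| < ε :=
  bolzano_cauchy_criterion_general f G
end

section
/- On a compact line K contained in the setting of Lemma 3.9: for every continuous f : K → ℝ and every ε > 0, there exists a finite division 0_K = z_0 ≤ z_1 ≤ ... ≤ z_n = 1_K of K such that for each i, either z_i has an immediate predecessor (is left-isolated), or |f(x) − f(y)| < ε for all x, y ∈ [z_{i-1}, z_i]. -/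
open Set Filter MeasureTheory

/-!
Let `S` be the set of points `b` such that `[⊥, b]` has a division of the required kind. The
closure of `S` is compact, so it has a greatest element `s`. Continuity of `f` at `s` gives
one-sided neighbourhoods of `s` on which `f` oscillates by less than `ε`. The left one
connects `s` to a point of `S` below it, so `s ∈ S` (a left-isolated `s` is reached from `⊥`
in one step). Unless `s = ⊤`, the right one, or else an immediate successor of `s`, yields a
point of `S` above `s`, contradicting maximality.
-/

section SmallOscillationDivision

variable {K : Type*} [LinearOrder K] {f : K → ℝ} {ε : ℝ}

def HasSmallOscDivision [OrderBot K] (f : K → ℝ) (ε : ℝ) (b : K) : Prop :=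
  ∃ (n : ℕ) (z : ℕ → K), z 0 = ⊥ ∧ z n = b ∧ (∀ i < n, z i ≤ z (i + 1)) ∧
    ∀ i < n, (∃ y, y ⋖ z (i + 1)) ∨
      ∀ x ∈ Icc (z i) (z (i + 1)), ∀ y ∈ Icc (z i) (z (i + 1)), |f x - f y| < ε

lemma hasSmallOscDivision_bot [OrderBot K] : HasSmallOscDivision f ε ⊥ :=
  ⟨0, fun _ => ⊥, rfl, rfl, by simp, by simp⟩

lemma HasSmallOscDivision.extend [OrderBot K] {b c : K} (hb : HasSmallOscDivision f ε b)
    (hbc : b ≤ c)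
    (hc : (∃ y, y ⋖ c) ∨ ∀ x ∈ Icc b c, ∀ y ∈ Icc b c, |f x - f y| < ε) :
    HasSmallOscDivision f ε c := by
  obtain ⟨n, z, h0, hn, hmono, hcells⟩ := hb
  refine ⟨n + 1, fun i => if i ≤ n then z i else c, by simp [h0], by simp, ?_, ?_⟩
  · intro i hi
    rcases (Nat.lt_succ_iff.mp hi).lt_or_eq with h | rfl
    · simpa [h.le, h] using hmono i h
    · simpa [hn] using hbc
  · intro i hi
    rcases (Nat.lt_succ_iff.mp hi).lt_or_eq with h | rfl
    · simpa [h.le, h] using hcells i h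
    · simpa [hn] using hc

lemma abs_sub_lt_of_mem_ball {a x y : ℝ} (hx : x ∈ Metric.ball a (ε / 2))
    (hy : y ∈ Metric.ball a (ε / 2)) : |x - y| < ε := by
  rw [Metric.mem_ball] at hx hy
  rw [← Real.dist_eq]
  linarith [dist_triangle_right x y a]

variable [TopologicalSpace K] [OrderTopology K]

lemma hasSmallOscDivision_of_mem_closure [OrderBot K] {s : K} (hf : ContinuousAt f s)
    (hε : 0 < ε) (hs : s ∈ closure {b | HasSmallOscDivision f ε b})
    (hub : ∀ b, HasSmallOscDivision f ε b → b ≤ s) : HasSmallOscDivision f ε s := by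
  by_cases hiso : ∃ y, y ⋖ s
  · exact hasSmallOscDivision_bot.extend bot_le (Or.inl hiso)
  rcases eq_bot_or_bot_lt s with rfl | hbot
  · exact hasSmallOscDivision_bot
  obtain ⟨c, hcs, hosc⟩ :=
    exists_Ioc_subset_of_mem_nhds (hf (Metric.ball_mem_nhds _ (half_pos hε))) ⟨⊥, hbot⟩
  obtain ⟨b, hcb, hb⟩ := mem_closure_iff.1 hs (Ioi c) isOpen_Ioi hcs
  refine hb.extend (hub b hb) (Or.inr fun x hx y hy => abs_sub_lt_of_mem_ball (a := f s) ?_ ?_)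
  · exact hosc ⟨hcb.trans_le hx.1, hx.2⟩
  · exact hosc ⟨hcb.trans_le hy.1, hy.2⟩

lemma HasSmallOscDivision.exists_gt [OrderBot K] {s : K} (hs : HasSmallOscDivision f ε s)
    (hf : ContinuousAt f s) (hε : 0 < ε) (hmax : ¬IsMax s) :
    ∃ t, s < t ∧ HasSmallOscDivision f ε t := by
  by_cases hsucc : ∃ t, s ⋖ t
  · obtain ⟨t, hst⟩ := hsucc
    exact ⟨t, hst.lt, hs.extend hst.le (Or.inl ⟨s, hst⟩)⟩
  obtain ⟨u, hsu, hosc⟩ := exists_Ico_subset_of_mem_nhds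
    (hf (Metric.ball_mem_nhds _ (half_pos hε))) (not_isMax_iff.1 hmax)
  obtain ⟨t, hst, htu⟩ := (not_covBy_iff hsu).1 fun h => hsucc ⟨u, h⟩
  refine ⟨t, hst, hs.extend hst.le (Or.inr fun x hx y hy => abs_sub_lt_of_mem_ball (a := f s) ?_ ?_)⟩
  · exact hosc ⟨hx.1, hx.2.trans_lt htu⟩
  · exact hosc ⟨hy.1, hy.2.trans_lt htu⟩

lemma hasSmallOscDivision_top [CompactSpace K] [BoundedOrder K] (hf : Continuous f)
    (hε : 0 < ε) : HasSmallOscDivision f ε ⊤ := by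
  set S := {b | HasSmallOscDivision f ε b}
  obtain ⟨s, hs, hmax⟩ := isClosed_closure.isCompact.exists_isGreatest
    ⟨⊥, subset_closure (show (⊥ : K) ∈ S from hasSmallOscDivision_bot)⟩
  have hub : ∀ b ∈ S, b ≤ s := fun b hb => hmax (subset_closure hb)
  have hsS : s ∈ S := hasSmallOscDivision_of_mem_closure hf.continuousAt hε hs hub
  by_cases htop : IsMax s
  · rwa [← htop.eq_top]
  obtain ⟨t, hst, ht⟩ := HasSmallOscDivision.exists_gt hsS hf.continuousAt hε htop
  exact absurd (hub t ht) hst.not_ge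

end SmallOscillationDivision

theorem division_small_oscillation {K : Type*} [LinearOrder K] [TopologicalSpace K]
    [OrderTopology K] [CompactSpace K] [BoundedOrder K] (f : K → ℝ) (hf : Continuous f)
    (ε : ℝ) (hε : 0 < ε) :
    ∃ (n : ℕ) (z : ℕ → K), z 0 = ⊥ ∧ z n = ⊤ ∧ (∀ i < n, z i ≤ z (i + 1)) ∧
      ∀ i < n, (∃ y, y ⋖ z (i + 1)) ∨
        ∀ x ∈ Set.Icc (z i) (z (i + 1)), ∀ y ∈ Set.Icc (z i) (z (i + 1)),
          |f x - f y| < ε :=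
  hasSmallOscDivision_top hf hε
end

section
/- Let K be a compact line, G : K → ℝ amenable, and I = [a,b] ⊆ K a compact subinterval. Then the indicator function f_I is G-integrable on K if and only if the restriction f|_I is G-integrable on I, and in that case ∫_K f_I dG = ∫_I f dG − f(a) L_G(a). -/
open Set Filter MeasureTheory

/-!
Cut `K` at `a` and at `b`. A gauge can force the interval `(x, y]` of a fine partition that
contains `a` to be tagged at `a`, with `x` as close to `a` from the left as we like. For a function
vanishing below `a`, clamping such a partition of `[⊥, d]` to `[a, d]` by `z ↦ max a z` changes
its Riemann sum by exactly `-f(a) G(x)`, and `G(x)` is close to `L_G(a)`: the left limit at a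
left-dense `a`, the value at the predecessor (which `x` must then be) at a left-isolated one.
Likewise, clamping to `[a, b]` by `z ↦ min b z` costs only `f(b) (G(y) - G(b))` with `y` just right
of `b`, which is small by right continuity. Conversely, a fine partition of `[a, b]` extends to one
of `K` by fixed fine partitions of the remaining pieces (Cousin's lemma), which contribute the same
boundary terms. Uniqueness of the integral on `[a, b]` then gives the value.
-/

open Topology

namespace TaggedPartition

variable {K : Type*} [LinearOrder K] {a b c d : K}

theorem x_mono (P : TaggedPartition K a b) {i j : ℕ} (hij : i ≤ j) (hj : j ≤ P.n) :
    P.x i ≤ P.x j := by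
  induction j, hij using Nat.le_induction with
  | base => exact le_rfl
  | succ j _ ih => exact (ih (by omega)).trans (P.mono j hj)

theorem x_mem (P : TaggedPartition K a b) {i : ℕ} (hi : i ≤ P.n) : P.x i ∈ Icc a b := by
  constructor
  · simpa [P.x_zero] using P.x_mono (Nat.zero_le i) hi
  · simpa [P.x_last] using P.x_mono hi le_rfl

theorem le (P : TaggedPartition K a b) : a ≤ b :=
  (P.x_mem le_rfl).1.trans (P.x_mem le_rfl).2

theorem t_mem (P : TaggedPartition K a b) {i : ℕ} (hi : i < P.n) : P.t (i + 1) ∈ Icc a b :=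
  ⟨(P.x_mem hi.le).1.trans (P.tag_mem i hi).1, (P.tag_mem i hi).2.trans (P.x_mem hi).2⟩

theorem Ioc_subset_Icc (P : TaggedPartition K a b) {i : ℕ} (hi : i < P.n) :
    Ioc (P.x i) (P.x (i + 1)) ⊆ Icc a b :=
  fun _ hy => ⟨(P.x_mem hi.le).1.trans hy.1.le, hy.2.trans (P.x_mem hi).2⟩

theorem eq_of_mem_Ioc (P : TaggedPartition K a b) {i j : ℕ} (hi : i < P.n) (hj : j < P.n) {u : K}
    (hui : u ∈ Ioc (P.x i) (P.x (i + 1))) (huj : u ∈ Ioc (P.x j) (P.x (j + 1))) : i = j := by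
  by_contra hne
  rcases Nat.lt_or_gt_of_ne hne with h | h
  · exact (hui.2.trans (P.x_mono h hj.le)).not_gt huj.1
  · exact (huj.2.trans (P.x_mono h hi.le)).not_gt hui.1

theorem eq_of_mem_Ico (P : TaggedPartition K a b) {i j : ℕ} (hi : i < P.n) (hj : j < P.n) {u : K}
    (hui : u ∈ Ico (P.x i) (P.x (i + 1))) (huj : u ∈ Ico (P.x j) (P.x (j + 1))) : i = j := by
  by_contra hne
  rcases Nat.lt_or_gt_of_ne hne with h | h
  · exact (hui.2.trans_le (P.x_mono h hj.le)).not_ge huj.1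
  · exact (huj.2.trans_le (P.x_mono h hi.le)).not_ge hui.1

theorem exists_mem_Ioc (P : TaggedPartition K a b) {u : K} (hu : u ∈ Ioc a b) :
    ∃ k < P.n, u ∈ Ioc (P.x k) (P.x (k + 1)) := by
  suffices ∀ j ≤ P.n, u ≤ P.x j → ∃ k < j, u ∈ Ioc (P.x k) (P.x (k + 1)) from
    this P.n le_rfl (P.x_last.symm ▸ hu.2)
  intro j
  induction j with
  | zero => exact fun _ h => absurd (P.x_zero.symm ▸ hu.1) h.not_gt
  | succ j ih =>
    intro hj hu'
    by_cases huj : u ≤ P.x j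
    · obtain ⟨k, hk, hk'⟩ := ih (by omega) huj
      exact ⟨k, by omega, hk'⟩
    · exact ⟨j, by omega, not_le.1 huj, hu'⟩

theorem riemannSum_eq_zero {h : K → ℝ} (G : K → ℝ) (P : TaggedPartition K a b)
    (hh : EqOn h 0 (Icc a b)) : riemannSum h G P = 0 := by
  rw [riemannSum, hh ⟨le_rfl, P.le⟩, Finset.sum_eq_zero fun i hi => by
    rw [hh (P.t_mem (Finset.mem_range.1 hi)), Pi.zero_apply, zero_mul]]
  simp

theorem riemannSum_of_self (h G : K → ℝ) (P : TaggedPartition K a a) :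
    riemannSum h G P = h a * G a := by
  rw [riemannSum, Finset.sum_eq_zero fun i hi => ?_, add_zero]
  have hi := Finset.mem_range.1 hi
  have hx : ∀ j ≤ P.n, P.x j = a := fun j hj => by simpa using P.x_mem hj
  rw [hx _ hi.le, hx _ hi, sub_self, mul_zero]

def single (a b t : K) (ht : t ∈ Icc a b) : TaggedPartition K a b where
  n := 1
  x i := if i = 0 then a else b
  t _ := t
  x_zero := rfl
  x_last := rfl
  mono i hi := by
    obtain rfl : i = 0 := by omega
    exact ht.1.trans ht.2
  tag_mem i hi := by
    obtain rfl : i = 0 := by omega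
    exact ht

theorem riemannSum_single (h G : K → ℝ) {t : K} (ht : t ∈ Icc a b) :
    riemannSum h G (single a b t ht) = h a * G a + h t * (G b - G a) := by
  simp [riemannSum, single]

theorem isFine_single {t : K} (ht : t ∈ Icc a b) {δ : K → Set K} (hδ : Ioc a b ⊆ δ t) :
    (single a b t ht).IsFine δ := by
  intro i (hi : i < 1)
  obtain rfl : i = 0 := by omega
  exact hδ

def concat (P : TaggedPartition K a b) (Q : TaggedPartition K b c) : TaggedPartition K a c where
  n := P.n + Q.n
  x i := if i ≤ P.n then P.x i else Q.x (i - P.n)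
  t i := if i ≤ P.n then P.t i else Q.t (i - P.n)
  x_zero := by simp [P.x_zero]
  x_last := by
    split_ifs with h
    · have hQ : Q.n = 0 := by omega
      rw [hQ, add_zero, P.x_last, ← Q.x_last, hQ, Q.x_zero]
    · simpa using Q.x_last
  mono i hi := by
    split_ifs with h₁ h₂ h₂
    · exact P.mono i (by omega)
    · obtain rfl : i = P.n := by omega
      simpa [P.x_last, Q.x_zero] using Q.mono 0 (by omega)
    · omega
    · rw [show i + 1 - P.n = i - P.n + 1 by omega]
      exact Q.mono _ (by omega)
  tag_mem i hi := by
    split_ifs with h₁ h₂ h₂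
    · exact P.tag_mem i (by omega)
    · obtain rfl : i = P.n := by omega
      simpa [P.x_last, Q.x_zero] using Q.tag_mem 0 (by omega)
    · omega
    · rw [show i + 1 - P.n = i - P.n + 1 by omega]
      exact Q.tag_mem _ (by omega)

section concat

variable (P : TaggedPartition K a b) (Q : TaggedPartition K b c) {i : ℕ}

theorem concat_x_of_le (h : i ≤ P.n) : (P.concat Q).x i = P.x i := if_pos h

theorem concat_x_of_ge (h : P.n ≤ i) : (P.concat Q).x i = Q.x (i - P.n) := by
  rcases h.eq_or_lt with rfl | h
  · simpa [P.x_last, Q.x_zero] using concat_x_of_le P Q le_rfl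
  · exact if_neg h.not_ge

theorem concat_t_of_le (h : i ≤ P.n) : (P.concat Q).t i = P.t i := if_pos h

theorem concat_t_of_gt (h : P.n < i) : (P.concat Q).t i = Q.t (i - P.n) := if_neg h.not_ge

theorem riemannSum_concat (h G : K → ℝ) :
    riemannSum h G (P.concat Q) = riemannSum h G P + riemannSum h G Q - h b * G b := by
  have hP : ∀ i ∈ Finset.range P.n, h ((P.concat Q).t (i + 1)) *
      (G ((P.concat Q).x (i + 1)) - G ((P.concat Q).x i)) =
        h (P.t (i + 1)) * (G (P.x (i + 1)) - G (P.x i)) := fun i hi => by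
    have hi := Finset.mem_range.1 hi
    rw [concat_t_of_le P Q hi, concat_x_of_le P Q hi, concat_x_of_le P Q hi.le]
  have hQ : ∀ j ∈ Finset.range Q.n, h ((P.concat Q).t (P.n + j + 1)) *
      (G ((P.concat Q).x (P.n + j + 1)) - G ((P.concat Q).x (P.n + j))) =
        h (Q.t (j + 1)) * (G (Q.x (j + 1)) - G (Q.x j)) := fun j _ => by
    rw [concat_t_of_gt P Q (by omega), concat_x_of_ge P Q (by omega),
      concat_x_of_ge P Q (by omega), show P.n + j + 1 - P.n = j + 1 by omega,
      show P.n + j - P.n = j by omega]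
  rw [riemannSum, riemannSum, riemannSum, show (P.concat Q).n = P.n + Q.n from rfl,
    Finset.sum_range_add, Finset.sum_congr rfl hP, Finset.sum_congr rfl hQ]
  ring

end concat

theorem IsFine.concat {P : TaggedPartition K a b} {Q : TaggedPartition K b c} {δ : K → Set K}
    (hP : P.IsFine δ) (hQ : Q.IsFine δ) : (P.concat Q).IsFine δ := by
  intro i (hi : i < P.n + Q.n)
  rcases Nat.lt_or_ge i P.n with h | h
  · rw [concat_x_of_le P Q h.le, concat_x_of_le P Q h, concat_t_of_le P Q h]
    exact hP i h
  · rw [concat_x_of_ge P Q h, concat_x_of_ge P Q (by omega), concat_t_of_gt P Q (by omega),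
      show i + 1 - P.n = i - P.n + 1 by omega]
    exact hQ _ (by omega)

def map {a' b' : K} (P : TaggedPartition K a b) (φ : K → K) (hφ : Monotone φ) (ha : φ a = a')
    (hb : φ b = b') : TaggedPartition K a' b' where
  n := P.n
  x := φ ∘ P.x
  t := φ ∘ P.t
  x_zero := by simp [P.x_zero, ha]
  x_last := by simp [P.x_last, hb]
  mono i hi := hφ (P.mono i hi)
  tag_mem i hi := ⟨hφ (P.tag_mem i hi).1, hφ (P.tag_mem i hi).2⟩

def projIci (P : TaggedPartition K c d) (hca : c ≤ a) (had : a ≤ d) : TaggedPartition K a d :=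
  P.map (max a) (monotone_const.max monotone_id) (max_eq_left hca) (max_eq_right had)

def projIic (P : TaggedPartition K c d) (hcb : c ≤ b) (hbd : b ≤ d) : TaggedPartition K c b :=
  P.map (min b) (monotone_const.min monotone_id) (min_eq_right hcb) (min_eq_left hbd)

def TagsAt (P : TaggedPartition K a b) (u : K) : Prop :=
  ∀ i < P.n, u ∈ Ioc (P.x i) (P.x (i + 1)) → P.t (i + 1) = u

theorem IsFine.mono_s8 {P : TaggedPartition K a b} {U V : K → Set K} (hP : P.IsFine U)
    (hUV : ∀ t, U t ⊆ V t) : P.IsFine V :=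
  fun i hi => (hP i hi).trans (hUV _)

theorem IsFine.mono_inter {P : TaggedPartition K a b} {U V : K → Set K} (hP : P.IsFine U)
    (hUV : ∀ t ∈ Icc a b, U t ∩ Icc a b ⊆ V t) : P.IsFine V :=
  fun i hi _ hy => hUV _ (P.t_mem hi) ⟨hP i hi hy, P.Ioc_subset_Icc hi hy⟩

end TaggedPartition

open TaggedPartition

section Gauge

variable {K : Type*} [LinearOrder K] [TopologicalSpace K] {a b : K}

theorem IsGauge.exists_nhds_inter_subset {δ : K → Set K} (hδ : IsGauge K a b δ) :
    ∃ V : K → Set K, (∀ t, V t ∈ 𝓝 t) ∧ ∀ t ∈ Icc a b, V t ∩ Icc a b ⊆ δ t := by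
  have : ∀ t, ∃ V ∈ 𝓝 t, t ∈ Icc a b → V ∩ Icc a b ⊆ δ t := fun t => by
    by_cases ht : t ∈ Icc a b
    · obtain ⟨htδ, -, U, hU, hδU⟩ := hδ t ht
      exact ⟨U, hU.mem_nhds (hδU ▸ htδ).1, fun _ => hδU.ge⟩
    · exact ⟨univ, univ_mem, fun h => absurd h ht⟩
  choose V hV hVδ using this
  exact ⟨V, hV, hVδ⟩

variable [OrderTopology K]

theorem exists_isOpen_ordConnected_subset {V : Set K} {t : K} (hV : V ∈ 𝓝 t) :
    ∃ O ⊆ V, IsOpen O ∧ O.OrdConnected ∧ t ∈ O := by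
  refine ⟨ordConnectedComponent (interior V) t, ordConnectedComponent_subset.trans
    interior_subset, isOpen_iff_mem_nhds.2 fun y hy => ?_, inferInstance,
    self_mem_ordConnectedComponent.2 (mem_interior_iff_mem_nhds.2 hV)⟩
  rw [ordConnectedComponent_eq (mem_ordConnectedComponent.1 hy), ordConnectedComponent_mem_nhds]
  exact isOpen_interior.mem_nhds (ordConnectedComponent_subset hy)

theorem exists_isGauge_subset {U : K → Set K} (hU : ∀ t ∈ Icc a b, U t ∈ 𝓝 t) :
    ∃ δ, IsGauge K a b δ ∧ ∀ t, δ t ⊆ U t := by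
  have : ∀ t, ∃ D ⊆ U t, t ∈ Icc a b →
      t ∈ D ∧ D.OrdConnected ∧ ∃ O, IsOpen O ∧ D = O ∩ Icc a b := fun t => by
    by_cases ht : t ∈ Icc a b
    · obtain ⟨O, hOU, hO, hOc, htO⟩ := exists_isOpen_ordConnected_subset (hU t ht)
      exact ⟨O ∩ Icc a b, inter_subset_left.trans hOU,
        fun _ => ⟨⟨htO, ht⟩, hOc.inter ordConnected_Icc, O, hO, rfl⟩⟩
    · exact ⟨∅, empty_subset _, fun h => absurd h ht⟩
  choose δ hδU hδ using this
  exact ⟨δ, fun t ht => hδ t ht, hδU⟩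

/-- Cousin's lemma, for gauges given by neighbourhoods. -/
theorem exists_isFine [CompactSpace K] (hab : a ≤ b) {U : K → Set K}
    (hU : ∀ t ∈ Icc a b, U t ∈ 𝓝 t) : ∃ P : TaggedPartition K a b, P.IsFine U := by
  set S := {c ∈ Icc a b | ∃ P : TaggedPartition K a c, P.IsFine U}
  have haS : a ∈ S := ⟨⟨le_rfl, hab⟩, single a a a ⟨le_rfl, le_rfl⟩, isFine_single _ (by simp)⟩
  have hext : ∀ c ∈ S, ∀ d t (ht : t ∈ Icc c d), d ≤ b → Ioc c d ⊆ U t → d ∈ S := by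
    rintro c ⟨hc, P, hP⟩ d t ht hdb hcd
    exact ⟨⟨hc.1.trans (ht.1.trans ht.2), hdb⟩, P.concat (single c d t ht),
      hP.concat (isFine_single ht hcd)⟩
  obtain ⟨s, -, hs⟩ := isClosed_closure.isCompact.exists_isLUB ⟨a, subset_closure haS⟩
  rw [← isLUB_iff_of_subset_of_subset_closure subset_closure subset_rfl] at hs
  have hsab : s ∈ Icc a b := ⟨hs.1 haS, hs.2 fun c hc => hc.1.2⟩
  have hsS : s ∈ S := by
    rcases hsab.1.eq_or_lt with rfl | has
    · exact haS
    obtain ⟨l, hl, hlU⟩ := exists_Ioc_subset_of_mem_nhds' (hU s hsab) has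
    obtain ⟨c, hcS, hlc, hcs⟩ := hs.exists_between hl.2
    exact hext c hcS s s ⟨hcs, le_rfl⟩ hsab.2 ((Ioc_subset_Ioc_left hlc.le).trans hlU)
  rcases hsab.2.eq_or_lt with rfl | hsb
  · exact hsS.2
  -- One more interval reaches past `s`: `(s, d]` tagged at `s` if `s` is right-dense,
  -- `(s, u]` tagged at the successor `u` of `s` otherwise.
  obtain ⟨u, ⟨hsu, hub⟩, hsubU⟩ := exists_Ico_subset_of_mem_nhds' (hU s hsab) hsb
  have : ∃ d, s < d ∧ d ∈ S := by
    by_cases hIoo : (Ioo s u).Nonempty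
    · obtain ⟨d, hd⟩ := hIoo
      exact ⟨d, hd.1, hext s hsS d s ⟨le_rfl, hd.1.le⟩ (hd.2.le.trans hub)
        fun y hy => hsubU ⟨hy.1.le, hy.2.trans_lt hd.2⟩⟩
    · refine ⟨u, hsu, hext s hsS u u ⟨hsu.le, le_rfl⟩ hub fun y hy => ?_⟩
      obtain rfl : y = u := hy.2.eq_of_not_lt fun h => hIoo ⟨y, hy.1, h⟩
      exact mem_of_mem_nhds (hU y ⟨hsab.1.trans hsu.le, hub⟩)
  obtain ⟨d, hsd, hdS⟩ := this
  exact absurd (hs.1 hdS) hsd.not_ge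

end Gauge

section Integral

variable {K : Type*} [LinearOrder K] [TopologicalSpace K] {f g G : K → ℝ} {a b : K} {A B : ℝ}

theorem HasIntegral.congr (hf : HasIntegral f G a b A) (hfg : EqOn f g (Icc a b)) :
    HasIntegral g G a b A := by
  refine fun ε hε => (hf ε hε).imp fun δ ⟨hδ, hP⟩ => ⟨hδ, fun P hPδ => ?_⟩
  have hfg : riemannSum g G P = riemannSum f G P := by
    rw [riemannSum, riemannSum, hfg ⟨le_rfl, P.le⟩]
    exact congrArg _ (Finset.sum_congr rfl fun i hi => by
      rw [hfg (P.t_mem (Finset.mem_range.1 hi))])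
  exact hfg ▸ hP P hPδ

theorem HasIntegral.of_forall_approx {a₁ b₁ a₂ b₂ : K} {c C : ℝ} (hB : HasIntegral f G a₂ b₂ B)
    (happrox : ∀ δ₂, IsGauge K a₂ b₂ δ₂ → ∀ ε > 0, ∃ δ₁, IsGauge K a₁ b₁ δ₁ ∧
      ∀ P : TaggedPartition K a₁ b₁, P.IsFine δ₁ → ∃ Q : TaggedPartition K a₂ b₂, Q.IsFine δ₂ ∧
        |riemannSum f G P - (riemannSum f G Q + c)| ≤ C * ε) :
    HasIntegral f G a₁ b₁ (B + c) := by
  intro ε hε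
  obtain ⟨δ₂, hδ₂, hQ⟩ := hB (ε / 2) (half_pos hε)
  have hε' : 0 < ε / (2 * (|C| + 1)) := by positivity
  obtain ⟨δ₁, hδ₁, happ⟩ := happrox δ₂ hδ₂ _ hε'
  refine ⟨δ₁, hδ₁, fun P hP => ?_⟩
  obtain ⟨Q, hQδ, hPQ⟩ := happ P hP
  have hC : C * (ε / (2 * (|C| + 1))) < ε / 2 := by
    calc C * (ε / (2 * (|C| + 1))) ≤ |C| * (ε / (2 * (|C| + 1))) :=
          mul_le_mul_of_nonneg_right (le_abs_self C) hε'.le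
      _ < (|C| + 1) * (ε / (2 * (|C| + 1))) := by gcongr; linarith
      _ = ε / 2 := by field_simp
  have htri := abs_sub_le (riemannSum f G P) (riemannSum f G Q + c) (B + c)
  rw [add_sub_add_right_eq_sub] at htri
  linarith [hQ Q hQδ]

theorem HasIntegral.unique [OrderTopology K] [CompactSpace K] (hab : a ≤ b)
    (hA : HasIntegral f G a b A) (hB : HasIntegral f G a b B) : A = B := by
  refine eq_of_forall_dist_le fun ε hε => ?_
  obtain ⟨δA, hδA, hPA⟩ := hA (ε / 2) (half_pos hε)
  obtain ⟨δB, hδB, hPB⟩ := hB (ε / 2) (half_pos hε)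
  obtain ⟨VA, hVA, hVAδ⟩ := hδA.exists_nhds_inter_subset
  obtain ⟨VB, hVB, hVBδ⟩ := hδB.exists_nhds_inter_subset
  obtain ⟨P, hP⟩ := exists_isFine hab fun t _ => inter_mem (hVA t) (hVB t)
  have hA' := hPA P ((hP.mono_s8 fun _ => inter_subset_left).mono_inter hVAδ)
  have hB' := hPB P ((hP.mono_s8 fun _ => inter_subset_right).mono_inter hVBδ)
  rw [Real.dist_eq]
  linarith [abs_sub_le A (riemannSum f G P) B, abs_sub_comm A (riemannSum f G P)]

end Integral

section Control

variable {K : Type*} [LinearOrder K] [TopologicalSpace K] {G : K → ℝ} {a b : K} {ε : ℝ}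

theorem Lfun_bot [BoundedOrder K] : Lfun G (⊥ : K) = 0 := if_pos rfl

theorem exists_mem_nhds_abs_sub_le (hG : ContinuousWithinAt G (Ici b) b) (hε : 0 < ε) :
    ∃ W ∈ 𝓝 b, ∀ y ∈ W, b ≤ y → |G y - G b| ≤ ε := by
  obtain ⟨W, hW, hWG⟩ :=
    mem_nhdsWithin_iff_exists_mem_nhds_inter.1 (hG (Metric.closedBall_mem_nhds (G b) hε))
  exact ⟨W, hW, fun y hy hby => by simpa [Real.dist_eq] using hWG ⟨hy, hby⟩⟩

variable [OrderTopology K]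

theorem exists_forall_Ico_abs_sub_Lfun_le [BoundedOrder K] (ha : a ≠ ⊥)
    (hG : (¬∃ y, y ⋖ a) → ∃ l, Tendsto G (𝓝[<] a) (𝓝 l)) (hε : 0 < ε) :
    ∃ c < a, ∀ y ∈ Ico c a, |G y - Lfun G a| ≤ ε := by
  by_cases hcov : ∃ y, y ⋖ a
  · obtain ⟨c, hc⟩ := id hcov
    have hL : Lfun G a = G c := by
      rw [Lfun, if_neg ha, dif_pos hcov, hcov.choose_spec.unique_left hc]
    refine ⟨c, hc.1, fun y hy => ?_⟩
    obtain rfl : y = c := le_antisymm (not_lt.1 fun h => hc.2 h hy.2) hy.1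
    simpa [hL] using hε.le
  · obtain ⟨l, hl⟩ := hG hcov
    have hbasis := nhdsLT_basis_of_exists_lt ⟨⊥, ha.bot_lt⟩
    have : (𝓝[<] a).NeBot := hbasis.neBot_iff.2 fun hl' =>
      (not_covBy_iff_nonempty_Ioo hl').1 fun h => hcov ⟨_, h⟩
    have hL : Lfun G a = l := by
      rw [Lfun, if_neg ha, dif_neg hcov]
      exact leftLim_eq_of_tendsto hl
    obtain ⟨l', hl'a, hl'⟩ := hbasis.mem_iff.1 (hl (Metric.closedBall_mem_nhds l hε))
    obtain ⟨c, hl'c, hca⟩ := (not_covBy_iff hl'a).1 fun h => hcov ⟨l', h⟩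
    refine ⟨c, hca, fun y hy => ?_⟩
    rw [hL, ← Real.dist_eq]
    exact hl' ⟨hl'c.trans_le hy.1, hy.2⟩

theorem exists_nhds_tagsAt {V : K → Set K} (hV : ∀ t, V t ∈ 𝓝 t) {u : K} {W : Set K}
    (hW : W ∈ 𝓝 u) :
    ∃ U : K → Set K, (∀ t, U t ∈ 𝓝 t) ∧ ∀ {a b : K} (P : TaggedPartition K a b), P.IsFine U →
      P.IsFine V ∧ P.TagsAt u ∧ ∀ i < P.n, P.t (i + 1) = u → Ioc (P.x i) (P.x (i + 1)) ⊆ W := by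
  classical
  refine ⟨fun t => V t ∩ if t = u then W else {u}ᶜ, fun t => inter_mem (hV t) ?_,
    fun P hP => ⟨hP.mono_s8 fun _ => inter_subset_left, fun i hi hu => ?_, fun i hi ht y hy => ?_⟩⟩
  · split_ifs with h
    · exact h ▸ hW
    · exact compl_singleton_mem_nhds h
  · by_contra h
    have := (hP i hi hu).2
    rw [if_neg h] at this
    exact this rfl
  · have := (hP i hi hy).2
    rwa [if_pos ht] at this

end Control

section Clamp

variable {K : Type*} [LinearOrder K] {h G : K → ℝ} {a b c d : K}

theorem sum_ite_eq_of_unique {p : ℕ → Prop} [DecidablePred p] {n k : ℕ} (hk : k < n) (hpk : p k)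
    (huniq : ∀ i < n, p i → i = k) (g : ℕ → ℝ) :
    ∑ i ∈ Finset.range n, (if p i then g i else 0) = g k := by
  rw [Finset.sum_eq_single_of_mem k (Finset.mem_range.2 hk) fun i hi hik =>
    if_neg fun hpi => hik (huniq i (Finset.mem_range.1 hi) hpi), if_pos hpk]

theorem riemannSummand_sub_max {x t y : K} (hxt : x ≤ t) (hty : t ≤ y)
    (htag : a ∈ Ioc x y → t = a) (hh : EqOn h 0 (Iio a)) :
    h t * (G y - G x) - h (max a t) * (G (max a y) - G (max a x)) =
      if a ∈ Ioc x y then h a * (G a - G x) else 0 := by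
  split_ifs with hmem
  · obtain rfl := htag hmem
    rw [max_self, max_eq_right hmem.2, max_eq_left hmem.1.le]
    ring
  · rcases lt_or_ge y a with hya | hay
    · rw [hh (hty.trans_lt hya), max_eq_left hya.le, max_eq_left ((hxt.trans hty).trans hya.le)]
      simp
    · have hax : a ≤ x := not_lt.1 fun hxa => hmem ⟨hxa, hay⟩
      rw [max_eq_right hax, max_eq_right (hax.trans hxt), max_eq_right hay]
      ring

theorem riemannSummand_sub_min {x t y : K} (hxt : x ≤ t) (hty : t ≤ y)
    (htag : b ∈ Ioc x y → t = b) (hh : EqOn h 0 (Ioi b)) :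
    h t * (G y - G x) - h (min b t) * (G (min b y) - G (min b x)) =
      if b ∈ Ico x y then h t * (G y - G b) else 0 := by
  split_ifs with hmem
  · rw [min_eq_left hmem.2.le, min_eq_right hmem.1]
    rcases le_or_gt t b with htb | hbt
    · rw [min_eq_right htb]
      ring
    · obtain rfl : x = b := hmem.1.eq_or_lt.resolve_right fun hxb =>
        hbt.ne' (htag ⟨hxb, hmem.2.le⟩)
      simp [hh hbt]
  · rcases le_or_gt y b with hyb | hby
    · rw [min_eq_right hyb, min_eq_right (hty.trans hyb), min_eq_right ((hxt.trans hty).trans hyb)]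
      ring
    · have hbx : b < x := not_le.1 fun hxb => hmem ⟨hxb, hby⟩
      rw [hh (hbx.trans_le hxt), min_eq_left hby.le, min_eq_left hbx.le]
      simp

namespace TaggedPartition

theorem riemannSum_map {a' b' : K} (P : TaggedPartition K a b) (φ : K → K) (hφ : Monotone φ)
    (ha : φ a = a') (hb : φ b = b') :
    riemannSum h G (P.map φ hφ ha hb) = h a' * G a' + ∑ i ∈ Finset.range P.n,
      h (φ (P.t (i + 1))) * (G (φ (P.x (i + 1))) - G (φ (P.x i))) := rfl

theorem IsFine.projIci {P : TaggedPartition K c d} {V δ : K → Set K} (hP : P.IsFine V)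
    (htag : P.TagsAt a) (hV : ∀ t ∈ Icc a d, V t ∩ Icc a d ⊆ δ t) (hca : c ≤ a) (had : a ≤ d) :
    (P.projIci hca had).IsFine δ := by
  intro i hi y hy
  change y ∈ Ioc (max a (P.x i)) (max a (P.x (i + 1))) at hy
  change y ∈ δ (max a (P.t (i + 1)))
  have hax : a < P.x (i + 1) := by
    simpa using (le_max_left a (P.x i)).trans_lt (hy.1.trans_le hy.2)
  have hat : a ≤ P.t (i + 1) := not_lt.1 fun hta =>
    hta.ne (htag i hi ⟨(P.tag_mem i hi).1.trans_lt hta, hax.le⟩)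
  have hyx : y ≤ P.x (i + 1) := hy.2.trans_eq (max_eq_right hax.le)
  rw [max_eq_right hat]
  exact hV _ ⟨hat, (P.t_mem hi).2⟩ ⟨hP i hi ⟨(le_max_right _ _).trans_lt hy.1, hyx⟩,
    (le_max_left _ _).trans hy.1.le, hyx.trans (P.x_mem hi).2⟩

theorem IsFine.projIic {P : TaggedPartition K c d} {V δ : K → Set K} (hP : P.IsFine V)
    (htag : P.TagsAt b) (hV : ∀ t ∈ Icc c b, V t ∩ Icc c b ⊆ δ t) (hcb : c ≤ b) (hbd : b ≤ d) :
    (P.projIic hcb hbd).IsFine δ := by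
  intro i hi y hy
  change y ∈ Ioc (min b (P.x i)) (min b (P.x (i + 1))) at hy
  change y ∈ δ (min b (P.t (i + 1)))
  have hxb : P.x i < b := by
    simpa using hy.1.trans_le (hy.2.trans (min_le_left b (P.x (i + 1))))
  have htb : P.t (i + 1) ≤ b := not_lt.1 fun hbt =>
    hbt.ne' (htag i hi ⟨hxb, hbt.le.trans (P.tag_mem i hi).2⟩)
  have hxy : P.x i < y := (min_eq_right hxb.le).symm.trans_lt hy.1
  rw [min_eq_right htb]
  exact hV _ ⟨(P.t_mem hi).1, htb⟩ ⟨hP i hi ⟨hxy, hy.2.trans (min_le_right _ _)⟩,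
    (P.x_mem hi.le).1.trans hxy.le, hy.2.trans (min_le_left _ _)⟩

theorem riemannSum_sub_riemannSum_projIci (P : TaggedPartition K c d) (hca : c < a) (had : a ≤ d)
    (htag : P.TagsAt a) (hh : EqOn h 0 (Iio a)) :
    ∃ k < P.n, a ∈ Ioc (P.x k) (P.x (k + 1)) ∧
      riemannSum h G P - riemannSum h G (P.projIci hca.le had) = -(h a * G (P.x k)) := by
  classical
  obtain ⟨k, hk, hak⟩ := P.exists_mem_Ioc ⟨hca, had⟩
  refine ⟨k, hk, hak, ?_⟩
  have hsum := sum_ite_eq_of_unique hk hak (fun i hi hai => P.eq_of_mem_Ioc hi hk hai hak)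
    fun i => h a * (G a - G (P.x i))
  rw [← Finset.sum_congr rfl fun i hi => riemannSummand_sub_max (P.tag_mem i
    (Finset.mem_range.1 hi)).1 (P.tag_mem i (Finset.mem_range.1 hi)).2
    (htag i (Finset.mem_range.1 hi)) hh, Finset.sum_sub_distrib] at hsum
  rw [projIci, riemannSum_map, riemannSum, hh hca, Pi.zero_apply]
  linear_combination hsum

theorem abs_riemannSum_sub_riemannSum_projIic_le (P : TaggedPartition K c d) (hcb : c ≤ b)
    (hbd : b ≤ d) (htag : P.TagsAt b) (hh : EqOn h 0 (Ioi b)) {W : Set K} {ε : ℝ}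
    (hPW : ∀ i < P.n, P.t (i + 1) = b → Ioc (P.x i) (P.x (i + 1)) ⊆ W)
    (hGW : ∀ y ∈ W, b ≤ y → |G y - G b| ≤ ε) (hε : 0 ≤ ε) :
    |riemannSum h G P - riemannSum h G (P.projIic hcb hbd)| ≤ |h b| * ε := by
  classical
  have hdiff : riemannSum h G P - riemannSum h G (P.projIic hcb hbd) =
      ∑ i ∈ Finset.range P.n, if b ∈ Ico (P.x i) (P.x (i + 1)) then
        h (P.t (i + 1)) * (G (P.x (i + 1)) - G b) else 0 := by
    rw [← Finset.sum_congr rfl fun i hi => riemannSummand_sub_min (P.tag_mem i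
      (Finset.mem_range.1 hi)).1 (P.tag_mem i (Finset.mem_range.1 hi)).2
      (htag i (Finset.mem_range.1 hi)) hh, Finset.sum_sub_distrib, projIic, riemannSum_map,
      riemannSum]
    ring
  rw [hdiff]
  by_cases hk : ∃ k < P.n, b ∈ Ico (P.x k) (P.x (k + 1))
  · obtain ⟨k, hk, hbk⟩ := hk
    rw [sum_ite_eq_of_unique hk hbk (fun i hi hbi => P.eq_of_mem_Ico hi hk hbi hbk), abs_mul]
    rcases eq_or_ne (P.t (k + 1)) b with htb | htb
    · rw [htb]
      exact mul_le_mul_of_nonneg_left (hGW _ (hPW k hk htb ⟨hbk.1.trans_lt hbk.2, le_rfl⟩)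
        hbk.2.le) (abs_nonneg _)
    · have hbt : b < P.t (k + 1) := lt_of_not_ge fun htb' => htb (htag k hk
        ⟨(P.tag_mem k hk).1.trans_lt (htb'.lt_of_ne htb), hbk.2.le⟩)
      rw [hh hbt, Pi.zero_apply, abs_zero, zero_mul]
      positivity
  · rw [Finset.sum_eq_zero fun i hi => if_neg fun hbi => hk ⟨i, Finset.mem_range.1 hi, hbi⟩,
      abs_zero]
    positivity

end TaggedPartition

end Clamp

section Transfer

variable {K : Type*} [LinearOrder K] [TopologicalSpace K] [OrderTopology K]
  {h G : K → ℝ} {a b d : K} {A B : ℝ}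

theorem HasIntegral.extend_bot [BoundedOrder K]
    (hG : a ≠ ⊥ → (¬∃ y, y ⋖ a) → ∃ l, Tendsto G (𝓝[<] a) (𝓝 l))
    (hh : EqOn h 0 (Iio a)) (had : a ≤ d) (hB : HasIntegral h G a d B) :
    HasIntegral h G ⊥ d (B - h a * Lfun G a) := by
  rcases eq_or_ne a ⊥ with rfl | ha
  · simpa [Lfun_bot] using hB
  rw [sub_eq_add_neg]
  refine hB.of_forall_approx (C := |h a|) fun δ hδ ε hε => ?_
  obtain ⟨c, hca, hc⟩ := exists_forall_Ico_abs_sub_Lfun_le ha (hG ha) hε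
  obtain ⟨V, hV, hVδ⟩ := hδ.exists_nhds_inter_subset
  obtain ⟨U, hU, hUfine⟩ := exists_nhds_tagsAt hV (Ioi_mem_nhds hca)
  obtain ⟨δ', hδ', hδ'U⟩ := exists_isGauge_subset (a := ⊥) (b := d) fun t _ => hU t
  refine ⟨δ', hδ', fun P hP => ?_⟩
  obtain ⟨hPV, htag, hPc⟩ := hUfine P (hP.mono_s8 hδ'U)
  obtain ⟨k, hk, hak, hdiff⟩ :=
    P.riemannSum_sub_riemannSum_projIci (h := h) (G := G) ha.bot_lt had htag hh
  refine ⟨P.projIci bot_le had, hPV.projIci htag hVδ bot_le had, ?_⟩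
  have hck : c ≤ P.x k := not_lt.1 fun hkc =>
    lt_irrefl c (hPc k hk (htag k hk hak) ⟨hkc, hca.le.trans hak.2⟩)
  calc _ = |-(h a * (G (P.x k) - Lfun G a))| := by
        congr 1
        linear_combination hdiff
    _ ≤ |h a| * ε := by
        rw [abs_neg, abs_mul]
        exact mul_le_mul_of_nonneg_left (hc _ ⟨hck, hak.1⟩) (abs_nonneg _)

theorem HasIntegral.restrict_bot [BoundedOrder K] [CompactSpace K]
    (hG : a ≠ ⊥ → (¬∃ y, y ⋖ a) → ∃ l, Tendsto G (𝓝[<] a) (𝓝 l)) (hh : EqOn h 0 (Iio a))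
    (hA : HasIntegral h G ⊥ d A) : HasIntegral h G a d (A + h a * Lfun G a) := by
  rcases eq_or_ne a ⊥ with rfl | ha
  · simpa [Lfun_bot] using hA
  refine hA.of_forall_approx (C := |h a|) fun δ hδ ε hε => ?_
  obtain ⟨c, hca, hc⟩ := exists_forall_Ico_abs_sub_Lfun_le ha (hG ha) hε
  obtain ⟨V, hV, hVδ⟩ := hδ.exists_nhds_inter_subset
  obtain ⟨l, ⟨hcl, hla⟩, hlV⟩ := exists_Ioc_subset_of_mem_nhds' (hV a) hca
  obtain ⟨P, hP⟩ := exists_isFine (bot_le : ⊥ ≤ l) fun t _ => hV t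
  obtain ⟨δ', hδ', hδ'V⟩ := exists_isGauge_subset (a := a) (b := d) fun t _ => hV t
  refine ⟨δ', hδ', fun Q hQ => ⟨(P.concat (single l a a (right_mem_Icc.2 hla.le))).concat Q,
    ((hP.concat (isFine_single _ hlV)).concat (hQ.mono_s8 hδ'V)).mono_inter hVδ, ?_⟩⟩
  rw [riemannSum_concat, riemannSum_concat, riemannSum_single,
    P.riemannSum_eq_zero G fun y hy => hh (hy.2.trans_lt hla), hh hla, Pi.zero_apply]
  calc _ = |h a * (G l - Lfun G a)| := by
        congr 1
        ring
    _ ≤ |h a| * ε := by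
        rw [abs_mul]
        exact mul_le_mul_of_nonneg_left (hc _ ⟨hcl, hla⟩) (abs_nonneg _)

theorem HasIntegral.extend_top (hG : ContinuousWithinAt G (Ici b) b) (hh : EqOn h 0 (Ioi b))
    (hab : a ≤ b) (hbd : b ≤ d) (hB : HasIntegral h G a b B) : HasIntegral h G a d B := by
  simpa using hB.of_forall_approx (c := 0) (C := |h b|) fun δ hδ ε hε => by
    obtain ⟨W, hW, hGW⟩ := exists_mem_nhds_abs_sub_le hG hε
    obtain ⟨V, hV, hVδ⟩ := hδ.exists_nhds_inter_subset
    obtain ⟨U, hU, hUfine⟩ := exists_nhds_tagsAt hV hW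
    obtain ⟨δ', hδ', hδ'U⟩ := exists_isGauge_subset (a := a) (b := d) fun t _ => hU t
    refine ⟨δ', hδ', fun P hP => ?_⟩
    obtain ⟨hPV, htag, hPW⟩ := hUfine P (hP.mono_s8 hδ'U)
    exact ⟨P.projIic hab hbd, hPV.projIic htag hVδ hab hbd, by
      simpa using P.abs_riemannSum_sub_riemannSum_projIic_le hab hbd htag hh hPW hGW hε.le⟩

theorem HasIntegral.restrict_top [CompactSpace K] (hG : ContinuousWithinAt G (Ici b) b)
    (hh : EqOn h 0 (Ioi b)) (hbd : b ≤ d) (hA : HasIntegral h G a d A) :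
    HasIntegral h G a b A := by
  simpa using hA.of_forall_approx (c := 0) (C := |h b|) fun δ hδ ε hε => by
    obtain ⟨W, hW, hGW⟩ := exists_mem_nhds_abs_sub_le hG hε
    obtain ⟨V, hV, hVδ⟩ := hδ.exists_nhds_inter_subset
    obtain ⟨U, hU, hUfine⟩ := exists_nhds_tagsAt hV hW
    obtain ⟨P, hP⟩ := exists_isFine hbd fun t _ => hU t
    obtain ⟨hPV, htag, hPW⟩ := hUfine P hP
    obtain ⟨δ', hδ', hδ'V⟩ := exists_isGauge_subset (a := a) (b := b) fun t _ => hV t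
    refine ⟨δ', hδ', fun Q hQ => ⟨Q.concat P, ((hQ.mono_s8 hδ'V).concat hPV).mono_inter hVδ, ?_⟩⟩
    have := P.abs_riemannSum_sub_riemannSum_projIic_le le_rfl hbd htag hh hPW hGW hε.le
    rw [riemannSum_of_self] at this
    rw [riemannSum_concat, abs_sub_comm]
    convert this using 2
    ring

end Transfer

theorem indicator_integral_subinterval {K : Type*} [LinearOrder K] [TopologicalSpace K]
    [OrderTopology K] [CompactSpace K] [BoundedOrder K] (G f : K → ℝ) (hG : Amenable G)
    (a b : K) (hab : a ≤ b) :
    ((∃ A, HasIntegral ((Set.Icc a b).indicator f) G (⊥ : K) ⊤ A) ↔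
      ∃ B, HasIntegral f G a b B) ∧
    ∀ A B, HasIntegral ((Set.Icc a b).indicator f) G (⊥ : K) ⊤ A →
      HasIntegral f G a b B → A = B - f a * Lfun G a := by
  set h := (Icc a b).indicator f
  have hlow : EqOn h 0 (Iio a) := fun _ hx => indicator_of_notMem (fun hx' => hx.not_ge hx'.1) f
  have hhigh : EqOn h 0 (Ioi b) := fun _ hx => indicator_of_notMem (fun hx' => hx.not_ge hx'.2) f
  have hha : h a = f a := indicator_of_mem (left_mem_Icc.2 hab) f
  have restrict : ∀ A, HasIntegral h G ⊥ ⊤ A → HasIntegral f G a b (A + f a * Lfun G a) :=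
    fun A hA => hha ▸ (((hA.restrict_bot (hG.2.1 a) hlow).restrict_top (hG.1 b) hhigh
      le_top).congr fun _ hx => indicator_of_mem hx f)
  have extend : ∀ B, HasIntegral f G a b B → HasIntegral h G ⊥ ⊤ (B - f a * Lfun G a) :=
    fun B hB => hha ▸ ((hB.congr fun _ hx => (indicator_of_mem hx f).symm).extend_top (hG.1 b)
      hhigh hab le_top).extend_bot (hG.2.1 a) hlow le_top
  refine ⟨⟨Exists.imp' _ restrict, Exists.imp' _ extend⟩, fun A B hA hB => ?_⟩
  linarith [(restrict A hA).unique hab hB]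
end
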